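/- Let r : ℝ^d → ℝ^n be continuously differentiable on the closed ball B(x0, Δ) ⊂ ℝ^d (Δ > 0), with Jacobian Dr Lipschitz continuous on B(x0, Δ) with constant L > 0 (in the Euclidean operator norm). Let y_1, ..., y_d ∈ B(x0, Δ) be such that the matrix W ∈ ℝ^{d×d} with columns y_1 − x0, ..., y_d − x0 is invertible, and let J ∈ ℝ^{n×d} satisfy J(y_t − x0) = r(y_t) − r(x0) for all t = 1, ..., d. Then ‖J − Dr(x0)‖₂ ≤ (√d · L/2) Δ² ‖W^{-1}‖₂, where ‖·‖₂ denotes the Euclidean operator norm. -/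

import Mathlib

open Metric

/-- Quadratic Taylor remainder bound for a function with Lipschitz derivative. -/
lemma taylor_quadratic_bound {d n : ℕ} {Δ L : ℝ} (hL : 0 ≤ L)
    {x0 : EuclideanSpace ℝ (Fin d)}
    {r : EuclideanSpace ℝ (Fin d) → EuclideanSpace ℝ (Fin n)}
    {Dr : EuclideanSpace ℝ (Fin d) →
      (EuclideanSpace ℝ (Fin d) →L[ℝ] EuclideanSpace ℝ (Fin n))}
    (hderiv : ∀ x ∈ closedBall x0 Δ,
      HasFDerivWithinAt r (Dr x) (closedBall x0 Δ) x)
    (hlip : ∀ u ∈ closedBall x0 Δ, ∀ v ∈ closedBall x0 Δ,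
      ‖Dr u - Dr v‖ ≤ L * ‖u - v‖)
    {yy : EuclideanSpace ℝ (Fin d)} (hyy : yy ∈ closedBall x0 Δ) :
    ‖r yy - r x0 - Dr x0 (yy - x0)‖ ≤ L / 2 * ‖yy - x0‖ ^ 2 := by
  set v := yy - x0 with hv
  have hvΔ : ‖v‖ ≤ Δ := by
    rw [hv, ← dist_eq_norm]; exact mem_closedBall.mp hyy
  have hc : ∀ t ∈ Set.Icc (0:ℝ) 1, x0 + t • v ∈ closedBall x0 Δ := by
    intro t ht
    rw [mem_closedBall, dist_eq_norm, add_sub_cancel_left, norm_smul,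
      Real.norm_eq_abs, abs_of_nonneg ht.1]
    calc t * ‖v‖ ≤ 1 * ‖v‖ := by
          apply mul_le_mul_of_nonneg_right ht.2 (norm_nonneg _)
      _ ≤ Δ := by rw [one_mul]; exact hvΔ
  set f : ℝ → EuclideanSpace ℝ (Fin n) :=
    fun t => r (x0 + t • v) - r x0 - t • (Dr x0 v) with hf
  have hf' : ∀ t ∈ Set.Icc (0:ℝ) 1,
      HasDerivWithinAt f (Dr (x0 + t • v) v - Dr x0 v) (Set.Icc 0 1) t := by
    intro t ht
    have hcder : HasDerivWithinAt (fun s : ℝ => x0 + s • v) v (Set.Icc 0 1) t := by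
      have h1 : HasDerivAt (fun s : ℝ => x0 + s • v) ((1:ℝ) • v) t :=
        (((hasDerivAt_id t).smul_const v).const_add x0)
      simpa using h1.hasDerivWithinAt
    have hcomp : HasDerivWithinAt (fun s : ℝ => r (x0 + s • v)) (Dr (x0 + t • v) v)
        (Set.Icc 0 1) t :=
      (hderiv _ (hc t ht)).comp_hasDerivWithinAt t hcder (fun s hs => hc s hs)
    have hlin : HasDerivWithinAt (fun s : ℝ => s • (Dr x0 v)) (Dr x0 v) (Set.Icc 0 1) t := by
      have h1 : HasDerivAt (fun s : ℝ => s • (Dr x0 v)) ((1:ℝ) • (Dr x0 v)) t :=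
        (hasDerivAt_id t).smul_const (Dr x0 v)
      simpa using h1.hasDerivWithinAt
    exact ((hcomp.sub_const (r x0)).sub hlin)
  set C := L * ‖v‖ ^ 2 with hC
  have hCnn : 0 ≤ C := by positivity
  have key : ∀ x ∈ Set.Icc (0:ℝ) 1, ‖f x‖ ≤ C / 2 * x ^ 2 := by
    have hB : ∀ x : ℝ, HasDerivAt (fun t => C / 2 * t ^ 2) (C * x) x := by
      intro x
      have := (hasDerivAt_pow 2 x).const_mul (C / 2)
      refine this.congr_deriv ?_
      have h21 : (2:ℕ) - 1 = 1 := rfl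
      rw [h21]; push_cast; ring
    refine image_norm_le_of_norm_deriv_right_le_deriv_boundary
      (f' := fun t => Dr (x0 + t • v) v - Dr x0 v)
      (fun x hx => (hf' x hx).continuousWithinAt)
      (fun x hx => (hf' x (Set.Ico_subset_Icc_self hx)).mono_of_mem_nhdsWithin
        (Icc_mem_nhdsGE_of_mem hx))
      ?_ hB ?_
    · simp [hf]
    · intro x hx
      have hx01 : x ∈ Set.Icc (0:ℝ) 1 := Set.Ico_subset_Icc_self hx
      show ‖Dr (x0 + x • v) v - Dr x0 v‖ ≤ C * x
      have h1 : Dr (x0 + x • v) v - Dr x0 v = (Dr (x0 + x • v) - Dr x0) v := by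
        simp
      rw [h1]
      calc ‖(Dr (x0 + x • v) - Dr x0) v‖
          ≤ ‖Dr (x0 + x • v) - Dr x0‖ * ‖v‖ := ContinuousLinearMap.le_opNorm _ _
        _ ≤ (L * ‖x0 + x • v - x0‖) * ‖v‖ := by
            apply mul_le_mul_of_nonneg_right _ (norm_nonneg _)
            exact hlip _ (hc x hx01) _ (mem_closedBall_self (le_trans (norm_nonneg _) hvΔ))
        _ = C * x := by
            rw [add_sub_cancel_left, norm_smul, Real.norm_eq_abs, abs_of_nonneg hx.1, hC]
            ring
  have h1 := key 1 ⟨zero_le_one, le_refl 1⟩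
  have hfe : f 1 = r yy - r x0 - Dr x0 v := by
    rw [hf]
    simp only [one_smul]
    rw [hv, add_sub_cancel]
  rw [hfe] at h1
  calc ‖r yy - r x0 - Dr x0 v‖ ≤ C / 2 * 1 ^ 2 := h1
    _ = L / 2 * ‖v‖ ^ 2 := by rw [hC]; ring

/-- Cauchy–Schwarz: the ℓ¹ norm is bounded by `√d` times the ℓ² norm. -/
lemma sum_abs_le_sqrt_card_mul_norm {d : ℕ} (v : EuclideanSpace ℝ (Fin d)) :
    ∑ t, |v t| ≤ Real.sqrt d * ‖v‖ := by
  set a : EuclideanSpace ℝ (Fin d) := WithLp.toLp 2 (fun t => |v t|) with ha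
  set b : EuclideanSpace ℝ (Fin d) := WithLp.toLp 2 (fun _ => 1) with hb
  have hinner : inner ℝ a b = ∑ t, |v t| := by
    rw [PiLp.inner_apply]
    simp [ha, hb]
  have hna : ‖a‖ = ‖v‖ := by
    rw [EuclideanSpace.norm_eq, EuclideanSpace.norm_eq]
    congr 1
    apply Finset.sum_congr rfl
    intro i _
    simp [ha]
  have hnb : ‖b‖ = Real.sqrt d := by
    rw [EuclideanSpace.norm_eq]
    simp [hb]
  calc ∑ t, |v t| = inner ℝ a b := hinner.symm
    _ ≤ ‖a‖ * ‖b‖ := real_inner_le_norm a b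
    _ = Real.sqrt d * ‖v‖ := by rw [hna, hnb]; ring

set_option maxHeartbeats 1000000 in
/-- If `r` is continuously differentiable on `B(x0, Δ)` with `L`-Lipschitz
Jacobian `Dr` (in the Euclidean operator norm), the points `y_1, …, y_d ∈ B(x0, Δ)` are
such that the matrix `W` with columns `y_t − x0` is invertible, and `J` satisfies the
interpolation conditions `J(y_t − x0) = r(y_t) − r(x0)`, then
`‖J − Dr(x0)‖₂ ≤ (√d · L/2) Δ² ‖W⁻¹‖₂` (Euclidean operator norms). -/
theorem interpolation_jacobian_error_bound
    (d n : ℕ) (hd : 0 < d) (hn : 0 < n) (Δ L : ℝ) (hΔ : 0 < Δ) (hL : 0 < L)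
    (x0 : EuclideanSpace ℝ (Fin d))
    (r : EuclideanSpace ℝ (Fin d) → EuclideanSpace ℝ (Fin n))
    (Dr : EuclideanSpace ℝ (Fin d) →
      (EuclideanSpace ℝ (Fin d) →L[ℝ] EuclideanSpace ℝ (Fin n)))
    (hderiv : ∀ x ∈ closedBall x0 Δ,
      HasFDerivWithinAt r (Dr x) (closedBall x0 Δ) x)
    (hDrCont : ContinuousOn Dr (closedBall x0 Δ))
    (hlip : ∀ u ∈ closedBall x0 Δ, ∀ v ∈ closedBall x0 Δ,
      ‖Dr u - Dr v‖ ≤ L * ‖u - v‖)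
    (y : Fin d → EuclideanSpace ℝ (Fin d)) (hy : ∀ t, y t ∈ closedBall x0 Δ)
    (W : Matrix (Fin d) (Fin d) ℝ) (hW : W = Matrix.of fun i t => (y t - x0) i)
    (hWinv : IsUnit W.det)
    (J : Matrix (Fin n) (Fin d) ℝ)
    (hJ : ∀ t, Matrix.toEuclideanLin J (y t - x0) = r (y t) - r x0) :
    ‖LinearMap.toContinuousLinearMap (Matrix.toEuclideanLin J) - Dr x0‖
      ≤ Real.sqrt d * (L / 2) * Δ ^ 2
        * ‖LinearMap.toContinuousLinearMap (Matrix.toEuclideanLin W⁻¹)‖ := by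
  set Jc := LinearMap.toContinuousLinearMap (Matrix.toEuclideanLin J) with hJc
  set Wic := LinearMap.toContinuousLinearMap (Matrix.toEuclideanLin W⁻¹) with hWic
  set Wc := LinearMap.toContinuousLinearMap (Matrix.toEuclideanLin W) with hWc
  set E := Jc - Dr x0 with hE
  -- Step 1: the error on each interpolation direction is at most (L/2) Δ².
  have step1 : ∀ t, ‖E (y t - x0)‖ ≤ L / 2 * Δ ^ 2 := by
    intro t
    have hEapp : E (y t - x0) = r (y t) - r x0 - Dr x0 (y t - x0) := by
      rw [hE]
      simp only [ContinuousLinearMap.sub_apply, hJc,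
        LinearMap.coe_toContinuousLinearMap', hJ t]
    rw [hEapp]
    have h1 := taylor_quadratic_bound hL.le hderiv hlip (hy t)
    refine h1.trans ?_
    have h2 : ‖y t - x0‖ ≤ Δ := by
      rw [← dist_eq_norm]; exact mem_closedBall.mp (hy t)
    have h3 : ‖y t - x0‖ ^ 2 ≤ Δ ^ 2 :=
      pow_le_pow_left₀ (norm_nonneg _) h2 2
    nlinarith
  -- Step 2: Wc sends v to ∑ t, v t • (y t - x0).
  have step2 : ∀ v : EuclideanSpace ℝ (Fin d), Wc v = ∑ t, v t • (y t - x0) := by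
    intro v
    ext i
    have : Wc v i = ∑ t, W i t * v t := rfl
    rw [this]
    have hsum : (∑ t, v t • (y t - x0)) i
        = ∑ t, (EuclideanSpace.proj (𝕜 := ℝ) i) (v t • (y t - x0)) :=
      map_sum (EuclideanSpace.proj (𝕜 := ℝ) i) (fun t => v t • (y t - x0)) Finset.univ
    rw [hsum]
    refine Finset.sum_congr rfl fun t _ => ?_
    show W i t * v t = v t * (y t - x0) i
    rw [hW, Matrix.of_apply]
    exact mul_comm _ _
  -- Step 3: bound on the composed map E ∘ Wc.
  have step3 : ‖E.comp Wc‖ ≤ Real.sqrt d * (L / 2 * Δ ^ 2) := by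
    apply ContinuousLinearMap.opNorm_le_bound
    · positivity
    · intro v
      have hval : (E.comp Wc) v = ∑ t, v t • E (y t - x0) := by
        rw [ContinuousLinearMap.comp_apply, step2 v, map_sum]
        exact Finset.sum_congr rfl fun t _ => map_smul E (v t) (y t - x0)
      rw [hval]
      calc ‖∑ t, v t • E (y t - x0)‖
          ≤ ∑ t, ‖v t • E (y t - x0)‖ := norm_sum_le _ _
        _ ≤ ∑ t, |v t| * (L / 2 * Δ ^ 2) := by
            apply Finset.sum_le_sum
            intro t _
            rw [norm_smul, Real.norm_eq_abs]
            exact mul_le_mul_of_nonneg_left (step1 t) (abs_nonneg _)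
        _ = (∑ t, |v t|) * (L / 2 * Δ ^ 2) := by rw [← Finset.sum_mul]
        _ ≤ (Real.sqrt d * ‖v‖) * (L / 2 * Δ ^ 2) := by
            apply mul_le_mul_of_nonneg_right (sum_abs_le_sqrt_card_mul_norm v)
            positivity
        _ = Real.sqrt d * (L / 2 * Δ ^ 2) * ‖v‖ := by ring
  -- Step 4: Wc ∘ Wic = id.
  have step4 : ∀ u : EuclideanSpace ℝ (Fin d), Wc (Wic u) = u := by
    intro u
    ext i
    have h1 : Wc (Wic u) i = (W.mulVec (W⁻¹.mulVec (WithLp.ofLp u))) i := rfl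
    rw [h1, Matrix.mulVec_mulVec, Matrix.mul_nonsing_inv _ hWinv, Matrix.one_mulVec]
  have hEcomp : (E.comp Wc).comp Wic = E := by
    ext u
    simp only [ContinuousLinearMap.comp_apply]
    rw [step4]
  calc ‖E‖ = ‖(E.comp Wc).comp Wic‖ := by rw [hEcomp]
    _ ≤ ‖E.comp Wc‖ * ‖Wic‖ := ContinuousLinearMap.opNorm_comp_le _ _
    _ ≤ (Real.sqrt d * (L / 2 * Δ ^ 2)) * ‖Wic‖ :=
        mul_le_mul_of_nonneg_right step3 (norm_nonneg _)
    _ = Real.sqrt d * (L / 2) * Δ ^ 2 * ‖Wic‖ := by ring
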